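/- For every i ≥ 2, the left-middle of stage u_i of the U fractal is separated from the rest of the fractal by the three left bottleneck points and the center point: if p is in the left-middle of u_i, q ∈ 𝐔, q is not in the left-middle of u_i, and p and q are grid-adjacent, then q is one of the three left bottleneck points of u_i or the center point of u_i. -/
import Mathlib


/-- A point of the integer lattice `ℤ²`. -/
abbrev Pt := ℤ × ℤ

/-- Two points are grid-adjacent when their `ℓ¹` distance is `1`. -/
def adjPt (p q : Pt) : Prop := |p.1 - q.1| + |p.2 - q.2| = 1

/-- The generator of the U fractal. -/
def GU : Set Pt := {(0,0),(0,1),(0,2),(1,0),(2,0),(2,1),(2,2)}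

/-- `scaleAddU k A B = A + k·B` (componentwise). -/
def scaleAddU (k : ℤ) (A B : Set Pt) : Set Pt :=
  {q | ∃ p ∈ A, ∃ g ∈ B, q = (p.1 + k * g.1, p.2 + k * g.2)}

/-- The stages of the U fractal: `ustage 1 = GU` and
`ustage (i+1) = ustage i + 3^i · GU` for `i ≥ 1`. -/
def ustage : ℕ → Set Pt
  | 0 => ∅
  | 1 => GU
  | n + 2 => scaleAddU (3 ^ (n + 1)) (ustage (n + 1)) GU

/-- The U fractal `𝐔 = ⋃_{i ≥ 1} u_i`. -/
def UFractal : Set Pt := {p | ∃ i : ℕ, 1 ≤ i ∧ p ∈ ustage i}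

/-- The three left bottleneck points of stage `u_i` of the U fractal (for `i ≥ 2`). -/
def leftBotU (i : ℕ) : Set Pt :=
  {q | ∃ b ∈ ({(0,0),(0,1),(0,2)} : Set Pt),
    q = (3 ^ (i - 1) + ((3 : ℤ) ^ (i - 2) - 1) / 2 + 3 ^ (i - 2) * b.1,
         3 ^ (i - 2) * b.2)}

/-- The center point of stage `u_i`. -/
def centerU (i : ℕ) : Pt := (((3 : ℤ) ^ i - 1) / 2, 0)

/-- The left-middle of stage `u_i`: the points of `u_i` strictly between the left
bottleneck column and the center column. -/
def leftMidU (i : ℕ) : Set Pt :=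
  {p ∈ ustage i |
    3 ^ (i - 1) + ((3 : ℤ) ^ (i - 2) - 1) / 2 < p.1 ∧ p.1 < ((3 : ℤ) ^ i - 1) / 2}

/-! ### Auxiliary machinery: base-3 digits -/

namespace USep

/-- The `j`-th base-3 digit of an integer. -/
def dig (j : ℕ) (x : ℤ) : ℤ := x / 3 ^ j % 3

lemma dig_nonneg (j : ℕ) (x : ℤ) : 0 ≤ dig j x := Int.emod_nonneg _ (by norm_num)

lemma dig_lt3 (j : ℕ) (x : ℤ) : dig j x < 3 := Int.emod_lt_of_pos _ (by norm_num)

lemma dig_add_high {j n : ℕ} (hj : j < n) (x g : ℤ) :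
    dig j (x + 3 ^ n * g) = dig j x := by
  have h1 : (3:ℤ) ^ n = 3 ^ j * (3 * 3 ^ (n - j - 1)) := by
    rw [show (3:ℤ) * 3 ^ (n - j - 1) = 3 ^ (n - j) by rw [← pow_succ']; congr 1; omega,
      ← pow_add]
    congr 1; omega
  rw [dig, dig, h1, mul_assoc, Int.add_mul_ediv_left _ _ (by positivity : (3:ℤ)^j ≠ 0),
    mul_assoc, Int.add_mul_emod_self_left]

lemma dig_add_top {n : ℕ} (x g : ℤ) (hx : 0 ≤ x) (hx' : x < 3 ^ n)
    (hg : 0 ≤ g) (hg' : g < 3) : dig n (x + 3 ^ n * g) = g := by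
  rw [dig, Int.add_mul_ediv_left _ _ (by positivity : (3:ℤ)^n ≠ 0),
    Int.ediv_eq_zero_of_lt hx hx', zero_add, Int.emod_eq_of_lt hg hg']

lemma dig_of_lt {j : ℕ} {x : ℤ} (hx : 0 ≤ x) (hx' : x < 3 ^ j) : dig j x = 0 := by
  rw [dig, Int.ediv_eq_zero_of_lt hx hx']
  norm_num

lemma ediv_lt_of_lt_mul {P x c : ℤ} (hP : 0 < P) (h : x < c * P) : x / P < c := by
  by_contra h'
  push_neg at h'
  exact absurd ((Int.le_ediv_iff_mul_le hP).mp h') (by omega)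

lemma lt_of_dig_eq_zero {n : ℕ} {x : ℤ} (hx : 0 ≤ x) (hx' : x < 3 ^ (n+1))
    (h : dig n x = 0) : x < 3 ^ n := by
  have hP : (0:ℤ) < 3 ^ n := by positivity
  have h0 : 0 ≤ x / 3 ^ n := Int.ediv_nonneg hx (le_of_lt hP)
  have h1 : x / 3 ^ n < 3 := ediv_lt_of_lt_mul hP (by rw [show (3:ℤ) * 3^n = 3^(n+1) by ring]; exact hx')
  have h2 : x / 3 ^ n = 0 := by
    have := Int.emod_eq_of_lt h0 h1
    rw [dig] at h; omega
  have h3 := Int.mul_ediv_add_emod x (3^n)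
  have h4 := Int.emod_lt_of_pos x hP
  rw [h2, mul_zero, zero_add] at h3
  omega

lemma low_digs_dvd : ∀ (m : ℕ) (y : ℤ), 0 ≤ y → (∀ j < m, dig j y = 0) → (3:ℤ)^m ∣ y := by
  intro m
  induction m with
  | zero => intro y _ _; rw [pow_zero]; exact one_dvd y
  | succ k ih =>
    intro y hy h
    obtain ⟨c, rfl⟩ := ih y hy (fun j hj => h j (by omega))
    have hP : (0:ℤ) < 3 ^ k := by positivity
    have hd : dig k (3^k * c) = c % 3 := by
      rw [dig, Int.mul_ediv_cancel_left _ (by positivity : (3:ℤ)^k ≠ 0)]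
    have h3 : c % 3 = 0 := by rw [← hd]; exact h k (by omega)
    obtain ⟨d, rfl⟩ := Int.dvd_of_emod_eq_zero h3
    exact ⟨d, by ring⟩

lemma high_digs_bound : ∀ (k t : ℕ) (y : ℤ), t ≤ k → 0 ≤ y → y < 3^k →
    (∀ j, t ≤ j → j < k → dig j y = 0) → y < 3^t := by
  intro k
  induction k with
  | zero =>
    intro t y ht _ hy _
    have : t = 0 := by omega
    subst this; exact hy
  | succ k ih =>
    intro t y ht hy hyk h
    rcases Nat.eq_or_lt_of_le ht with rfl | ht'
    · exact hyk
    · have hk : y < 3 ^ k := lt_of_dig_eq_zero hy hyk (h k (by omega) (by omega))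
      exact ih t y (by omega) hy hk (fun j h1 h2 => h j h1 (by omega))

lemma eq_zero_of_digs (k : ℕ) (y : ℤ) (hy : 0 ≤ y) (hk : y < 3^k)
    (h : ∀ j < k, dig j y = 0) : y = 0 := by
  have h1 := high_digs_bound k 0 y (by omega) hy hk (fun j _ hj => h j hj)
  simp only [pow_zero] at h1
  omega

lemma single_dig (k m : ℕ) (y : ℤ) (hm : m < k) (h0 : 0 ≤ y) (h1 : y < 3^k)
    (h : ∀ j < k, j ≠ m → dig j y = 0) : y = 3^m * dig m y := by
  have hb : y < 3^(m+1) := high_digs_bound k (m+1) y (by omega) h0 h1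
    (fun j hj1 hj2 => h j hj2 (by omega))
  obtain ⟨c, rfl⟩ := low_digs_dvd m y h0 (fun j hj => h j (by omega) (by omega))
  have hP : (0:ℤ) < 3 ^ m := by positivity
  have hc0 : 0 ≤ c := by nlinarith
  have hc3 : c < 3 := by nlinarith [pow_succ (3:ℤ) m]
  have : dig m (3^m * c) = c := by
    rw [dig, Int.mul_ediv_cancel_left _ (by positivity : (3:ℤ)^m ≠ 0),
      Int.emod_eq_of_lt hc0 hc3]
  rw [this]

lemma dig_eq_one_of_between {n : ℕ} {x : ℤ} (h1 : 3^n ≤ x) (h2 : x < 2 * 3^n) :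
    dig n x = 1 := by
  have hP : (0:ℤ) < 3 ^ n := by positivity
  have e : x = (x - 3^n) + 3^n * 1 := by ring
  rw [e, dig_add_top (x - 3^n) 1 (by omega) (by omega) (by norm_num) (by norm_num)]

/-! ### The column centers -/

/-- `cC k = (3^k - 1)/2`, the `x`-coordinate of the center of `u_k`. -/
def cC : ℕ → ℤ
  | 0 => 0
  | k+1 => 3 * cC k + 1

lemma cC_spec (k : ℕ) : 2 * cC k + 1 = 3 ^ k := by
  induction k with
  | zero => simp [cC]
  | succ k ih => rw [cC, pow_succ]; omega

lemma cC_nonneg (k : ℕ) : 0 ≤ cC k := by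
  have := cC_spec k
  have : (0:ℤ) < 3 ^ k := by positivity
  omega

lemma cC_eq (k : ℕ) : ((3:ℤ)^k - 1) / 2 = cC k := by
  have := cC_spec k
  omega

lemma cC_add (a b : ℕ) : cC (a + b) = cC a + 3^a * cC b := by
  have h1 := cC_spec (a + b)
  have h2 := cC_spec a
  have h3 := cC_spec b
  have h4 : (3:ℤ)^(a+b) = 3^a * 3^b := pow_add 3 a b
  have key : (3:ℤ)^a * 3^b = 4 * (cC a * cC b) + 2 * cC a + 2 * cC b + 1 := by
    rw [← h2, ← h3]; ring
  have key2 : (3:ℤ)^a * cC b = 2 * (cC a * cC b) + cC b := by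
    rw [← h2]; ring
  omega

lemma cC_lt (k : ℕ) : cC k < 3 ^ k := by
  have := cC_spec k
  have := cC_nonneg k
  omega

lemma cC_dig {k j : ℕ} (hj : j < k) : dig j (cC k) = 1 := by
  have e1 : k = (j + 1) + (k - j - 1) := by omega
  have e0 : cC k = cC (j+1) + 3^(j+1) * cC (k - j - 1) := by
    conv_lhs => rw [e1]
    rw [cC_add]
  have e2 : cC k = (cC j + 3^j * 1) + 3^(j+1) * cC (k - j - 1) := by
    have h1 := cC_spec (j+1)
    have h2 := cC_spec j
    have h3 : (3:ℤ)^(j+1) = 3 * 3^j := by ring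
    omega
  rw [e2, dig_add_high (by omega),
    dig_add_top _ _ (cC_nonneg j) (cC_lt j) (by norm_num) (by norm_num)]

/-! ### Digit characterization of the stages -/

lemma mem_GU_iff (g : Pt) : g ∈ GU ↔
    (0 ≤ g.1 ∧ g.1 < 3 ∧ 0 ≤ g.2 ∧ g.2 < 3 ∧ (g.1 = 1 → g.2 = 0)) := by
  obtain ⟨a, b⟩ := g
  simp only [GU, Set.mem_insert_iff, Set.mem_singleton_iff, Prod.mk.injEq]
  omega

lemma ustage_char : ∀ (i : ℕ), 1 ≤ i → ∀ p : Pt,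
    (p ∈ ustage i ↔ (0 ≤ p.1 ∧ p.1 < 3^i ∧ 0 ≤ p.2 ∧ p.2 < 3^i ∧
      ∀ j < i, dig j p.1 = 1 → dig j p.2 = 0)) := by
  intro i
  induction i with
  | zero => omega
  | succ n ih =>
    intro _ p
    match n, ih with
    | 0, _ =>
      show p ∈ GU ↔ _
      rw [mem_GU_iff]
      constructor
      · rintro ⟨h1, h2, h3, h4, h5⟩
        refine ⟨h1, by simpa using h2, h3, by simpa using h4, ?_⟩
        intro j hj
        interval_cases j
        simp only [dig, pow_zero, Int.ediv_one]
        omega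
      · rintro ⟨h1, h2, h3, h4, h5⟩
        have h6 := h5 0 (by omega)
        simp only [dig, pow_zero, Int.ediv_one] at h6
        exact ⟨h1, by simpa using h2, h3, by simpa using h4, by omega⟩
    | m+1, ih =>
      have IH := ih (by omega)
      show p ∈ scaleAddU (3^(m+1)) (ustage (m+1)) GU ↔ _
      constructor
      · rintro ⟨a, ha, g, hg, rfl⟩
        obtain ⟨a1, a2, a3, a4, a5⟩ := (IH a).mp ha
        rw [mem_GU_iff] at hg
        obtain ⟨g1, g2, g3, g4, g5⟩ := hg
        have hP : (0:ℤ) < 3^(m+1) := by positivity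
        have hE : (3:ℤ)^(m+1+1) = 3 * 3^(m+1) := by ring
        have hg1 : g.1 = 0 ∨ g.1 = 1 ∨ g.1 = 2 := by omega
        have hg2 : g.2 = 0 ∨ g.2 = 1 ∨ g.2 = 2 := by omega
        refine ⟨?_, ?_, ?_, ?_, ?_⟩
        · rcases hg1 with h|h|h <;> rw [h] <;> omega
        · rcases hg1 with h|h|h <;> rw [h] <;> omega
        · rcases hg2 with h|h|h <;> rw [h] <;> omega
        · rcases hg2 with h|h|h <;> rw [h] <;> omega
        · intro j hj hd
          rcases (by omega : j < m + 1 ∨ j = m + 1) with h | rfl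
          · rw [dig_add_high h] at hd
            rw [dig_add_high h]
            exact a5 j h hd
          · rw [dig_add_top a.1 g.1 a1 a2 g1 g2] at hd
            rw [dig_add_top a.2 g.2 a3 a4 g3 g4]
            exact g5 hd
      · rintro ⟨h1, h2, h3, h4, h5⟩
        have hP : (0:ℤ) < 3^(m+1) := by positivity
        have hE : (3:ℤ)^(m+1+1) = 3 * 3^(m+1) := by ring
        have e1 : p.1 = p.1 % 3^(m+1) + 3^(m+1) * (p.1 / 3^(m+1)) :=
          (Int.emod_add_mul_ediv p.1 (3^(m+1))).symm
        have e2 : p.2 = p.2 % 3^(m+1) + 3^(m+1) * (p.2 / 3^(m+1)) :=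
          (Int.emod_add_mul_ediv p.2 (3^(m+1))).symm
        have m1n := Int.emod_nonneg p.1 (ne_of_gt hP)
        have m2n := Int.emod_nonneg p.2 (ne_of_gt hP)
        have m1l := Int.emod_lt_of_pos p.1 hP
        have m2l := Int.emod_lt_of_pos p.2 hP
        have d1n : 0 ≤ p.1 / 3^(m+1) := Int.ediv_nonneg h1 (le_of_lt hP)
        have d2n : 0 ≤ p.2 / 3^(m+1) := Int.ediv_nonneg h3 (le_of_lt hP)
        have d1l : p.1 / 3^(m+1) < 3 := ediv_lt_of_lt_mul hP (by omega)
        have d2l : p.2 / 3^(m+1) < 3 := ediv_lt_of_lt_mul hP (by omega)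
        have hdtop1 : dig (m+1) p.1 = p.1 / 3^(m+1) := by
          rw [dig, Int.emod_eq_of_lt d1n d1l]
        have hdtop2 : dig (m+1) p.2 = p.2 / 3^(m+1) := by
          rw [dig, Int.emod_eq_of_lt d2n d2l]
        refine ⟨(p.1 % 3^(m+1), p.2 % 3^(m+1)), ?_, (p.1 / 3^(m+1), p.2 / 3^(m+1)), ?_, ?_⟩
        · refine (IH _).mpr ⟨m1n, m1l, m2n, m2l, ?_⟩
          intro j hj hd
          have r1 : dig j (p.1 % 3^(m+1)) = dig j p.1 := by
            conv_rhs => rw [e1]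
            rw [dig_add_high hj]
          have r2 : dig j (p.2 % 3^(m+1)) = dig j p.2 := by
            conv_rhs => rw [e2]
            rw [dig_add_high hj]
          rw [r2]
          exact h5 j (by omega) (by rw [← r1]; exact hd)
        · rw [mem_GU_iff]
          refine ⟨d1n, d1l, d2n, d2l, ?_⟩
          intro hone
          have := h5 (m+1) (by omega) (by rw [hdtop1]; exact hone)
          rw [hdtop2] at this
          exact this
        · dsimp only
          exact Prod.ext (by omega) (by omega)

lemma ustage_restrict {m i : ℕ} {q : Pt} (hm : 1 ≤ m) (hi : 1 ≤ i)
    (hq : q ∈ ustage m) (h1 : q.1 < 3^i) (h2 : q.2 < 3^i) : q ∈ ustage i := by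
  obtain ⟨a1, a2, a3, a4, a5⟩ := (ustage_char m hm q).mp hq
  refine (ustage_char i hi q).mpr ⟨a1, h1, a3, h2, ?_⟩
  intro j hj hd
  by_cases hjm : j < m
  · exact a5 j hjm hd
  · exfalso
    have hb : q.1 < 3^j :=
      lt_of_lt_of_le a2 (pow_le_pow_right₀ (by norm_num) (by omega))
    rw [dig_of_lt a1 hb] at hd
    exact absurd hd (by norm_num)

/-! ### Reformulations of the regions -/

lemma leftMid_iff (n : ℕ) (p : Pt) :
    p ∈ leftMidU (n+2) ↔
      (p ∈ ustage (n+2) ∧ 3^(n+1) + cC n < p.1 ∧ p.1 < cC (n+2)) := by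
  have e1 : (n+2) - 1 = n+1 := rfl
  have e2 : (n+2) - 2 = n := rfl
  simp only [leftMidU, Set.mem_setOf_eq, e1, e2, cC_eq]

lemma centerU_eq (n : ℕ) : centerU (n+2) = (cC (n+2), 0) := by
  rw [centerU, cC_eq]

lemma mem_leftBot (n : ℕ) (d : ℤ) (hd : d = 0 ∨ d = 1 ∨ d = 2) :
    (((3:ℤ)^(n+1) + cC n, 3^n * d) : Pt) ∈ leftBotU (n+2) := by
  refine ⟨(0, d), ?_, ?_⟩
  · rcases hd with rfl | rfl | rfl <;> simp
  · have e1 : (n+2) - 1 = n+1 := rfl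
    have e2 : (n+2) - 2 = n := rfl
    rw [e1, e2, cC_eq]
    exact Prod.ext (by ring) (by ring)

end USep

open USep in
/-- For `i ≥ 2`, the left-middle of `u_i` is separated from the
rest of `𝐔` by the three left bottleneck points and the center point. -/
theorem leftMidU_separated :
    ∀ i : ℕ, 2 ≤ i → ∀ p ∈ leftMidU i, ∀ q ∈ UFractal, q ∉ leftMidU i →
      adjPt p q → q ∈ leftBotU i ∨ q = centerU i := by
  intro i hi p hp q hq hqn hadj
  obtain ⟨n, rfl⟩ : ∃ n, i = n + 2 := ⟨i - 2, by omega⟩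
  rw [leftMid_iff] at hp
  obtain ⟨hpU, hpL, hpC⟩ := hp
  obtain ⟨m, hm, hqm⟩ := hq
  have hi2 : 1 ≤ n + 2 := by omega
  obtain ⟨p1n, p1b, p2n, p2b, pd⟩ := (ustage_char (n+2) hi2 p).mp hpU
  obtain ⟨q1n, q1b, q2n, q2b, qd⟩ := (ustage_char m hm q).mp hqm
  have hcc : 2 * cC n + 1 = 3^n := cC_spec n
  have hcc2 : 2 * cC (n+2) + 1 = 3^(n+2) := cC_spec (n+2)
  have hccn : 0 ≤ cC n := cC_nonneg n
  have e32 : (3:ℤ)^(n+2) = 3 * 3^(n+1) := by ring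
  have e21 : (3:ℤ)^(n+1) = 3 * 3^n := by ring
  have Pn : (0:ℤ) < 3^n := by positivity
  have hadj' : (q.2 = p.2 ∧ (q.1 = p.1 + 1 ∨ q.1 = p.1 - 1)) ∨
      (q.1 = p.1 ∧ (q.2 = p.2 + 1 ∨ q.2 = p.2 - 1)) := by
    rw [adjPt] at hadj
    rcases abs_cases (p.1 - q.1) with ⟨e1, _⟩ | ⟨e1, _⟩ <;>
      rcases abs_cases (p.2 - q.2) with ⟨e2, _⟩ | ⟨e2, _⟩ <;> omega
  rcases hadj' with ⟨hq2, hq1⟩ | ⟨hq1, hq2⟩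
  · -- horizontal move
    rcases (by omega : q.1 = cC (n+2) ∨ q.1 = 3^(n+1) + cC n ∨
        (3^(n+1) + cC n < q.1 ∧ q.1 < cC (n+2))) with hqC | hqL | ⟨h1, h2⟩
    · -- q is the center point
      right
      have hmge : n + 2 ≤ m := by
        by_contra h
        have : (3:ℤ)^m ≤ 3^(n+1) := pow_le_pow_right₀ (by norm_num) (by omega)
        omega
      have hzero : q.2 = 0 := by
        refine eq_zero_of_digs (n+2) q.2 q2n (by omega) ?_
        intro j hj
        exact qd j (by omega) (by rw [hqC]; exact cC_dig hj)
      rw [centerU_eq]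
      exact Prod.ext hqC hzero
    · -- q is a left bottleneck point
      left
      have hmge : n + 2 ≤ m := by
        by_contra h
        have : (3:ℤ)^m ≤ 3^(n+1) := pow_le_pow_right₀ (by norm_num) (by omega)
        omega
      have hdig : ∀ j < n+2, j ≠ n → dig j q.2 = 0 := by
        intro j hj hjn
        apply qd j (by omega)
        rw [hqL]
        have e : (3:ℤ)^(n+1) + cC n = cC n + 3^(n+1) * 1 := by ring
        rcases (by omega : j < n ∨ j = n + 1) with h | rfl
        · rw [e, dig_add_high (by omega)]
          exact cC_dig h
        · rw [e, dig_add_top _ _ (cC_nonneg n) (by omega) (by norm_num) (by norm_num)]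
      have heq : q.2 = 3^n * dig n q.2 :=
        single_dig (n+2) n q.2 (by omega) q2n (by omega) hdig
      have hdr : dig n q.2 = 0 ∨ dig n q.2 = 1 ∨ dig n q.2 = 2 := by
        have := dig_nonneg n q.2
        have := dig_lt3 n q.2
        omega
      have : q = (((3:ℤ)^(n+1) + cC n, 3^n * dig n q.2) : Pt) := Prod.ext hqL heq
      rw [this]
      exact mem_leftBot n _ hdr
    · -- q strictly inside the column range: contradiction
      exfalso
      have hqU : q ∈ ustage (n+2) := ustage_restrict hm hi2 hqm (by omega) (by omega)
      exact hqn ((leftMid_iff n q).mpr ⟨hqU, h1, h2⟩)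
  · -- vertical move: contradiction
    exfalso
    have hd1 : dig (n+1) p.1 = 1 := dig_eq_one_of_between (by omega) (by omega)
    have hd2 : dig (n+1) p.2 = 0 := pd (n+1) (by omega) hd1
    have hp2 : p.2 < 3^(n+1) := lt_of_dig_eq_zero p2n p2b hd2
    have hqU : q ∈ ustage (n+2) := ustage_restrict hm hi2 hqm (by omega) (by omega)
    exact hqn ((leftMid_iff n q).mpr ⟨hqU, by omega, by omega⟩)
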